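/- arXiv:1707.06340 — 4 statements merged into one kernel-verified Lean document; each statement's English description precedes it below -/
import Mathlib

section
/- Proposition 2 (commutation of modulo with finite differences): for every λ > 0, every N ∈ ℕ, every sequence a : ℤ → ℝ, and every k ∈ ℤ, M_λ((Δ^N a)_k) = M_λ((Δ^N (M_λ ∘ a))_k), where M_λ ∘ a denotes the sequence k ↦ M_λ(a_k). -/
/-!
`M_λ t` depends only on the class of `t` modulo `2λℤ`, and `M_λ t ≡ t` modulo `2λℤ`. Since `Δ` is
additive with integer coefficients, `Δ^N` maps sequences that agree modulo `2λℤ` termwise to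
sequences that agree modulo `2λℤ` termwise; apply this to `a` and `M_λ ∘ a`.
-/

/-- Centered modulo map `M_λ(t) = 2λ(⟨t/(2λ) + 1/2⟩ - 1/2)`. -/
noncomputable def Mlam (l t : ℝ) : ℝ := 2 * l * (Int.fract (t / (2 * l) + 1 / 2) - 1 / 2)

/-- First-order finite difference of a sequence. -/
def fdiff (a : ℤ → ℝ) : ℤ → ℝ := fun k => a (k + 1) - a k

theorem Mlam_eq_of_sub_mem_zmultiples {l t s : ℝ}
    (h : t - s ∈ AddSubgroup.zmultiples (2 * l)) : Mlam l t = Mlam l s := by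
  rcases eq_or_ne l 0 with rfl | hl
  · simp [Mlam]
  obtain ⟨m, hm⟩ := AddSubgroup.mem_zmultiples_iff.mp h
  rw [zsmul_eq_mul] at hm
  have hshift : t / (2 * l) + 1 / 2 = s / (2 * l) + 1 / 2 + m := by
    field_simp
    linarith
  rw [Mlam, Mlam, hshift, Int.fract_add_intCast]

theorem Mlam_eq_sub_round {l : ℝ} (hl : l ≠ 0) (t : ℝ) :
    Mlam l t = t - 2 * l * round (t / (2 * l)) := by
  rw [Mlam, round_eq, Int.fract]
  field_simp
  ring

theorem Mlam_sub_self_mem_zmultiples {l : ℝ} (hl : l ≠ 0) (t : ℝ) :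
    Mlam l t - t ∈ AddSubgroup.zmultiples (2 * l) :=
  AddSubgroup.mem_zmultiples_iff.mpr
    ⟨-round (t / (2 * l)), by rw [Mlam_eq_sub_round hl, zsmul_eq_mul]; push_cast; ring⟩

theorem fdiff_iterate_sub_mem {H : AddSubgroup ℝ} {a b : ℤ → ℝ} (h : ∀ j, b j - a j ∈ H)
    (n : ℕ) (k : ℤ) : fdiff^[n] b k - fdiff^[n] a k ∈ H := by
  induction n generalizing a b with
  | zero => exact h k
  | succ n ih =>
    refine ih fun j => ?_
    have hsplit : fdiff b j - fdiff a j = (b (j + 1) - a (j + 1)) - (b j - a j) := by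
      simp only [fdiff]
      ring
    exact hsplit ▸ H.sub_mem (h (j + 1)) (h j)

/-- modulo commutes with finite differences under `M_λ`. -/
theorem Mlam_comm_fdiff (l : ℝ) (hl : 0 < l) (N : ℕ) (a : ℤ → ℝ) (k : ℤ) :
    Mlam l ((fdiff^[N] a) k) = Mlam l ((fdiff^[N] (fun j => Mlam l (a j))) k) :=
  (Mlam_eq_of_sub_mem_zmultiples
    (fdiff_iterate_sub_mem (fun j => Mlam_sub_self_mem_zmultiples hl.ne' (a j)) N k)).symm
end

section
/- Let N ≥ 1, let g : ℝ → ℝ be N-times continuously differentiable, let B ≥ 0 satisfy |g(t)| ≤ B for all t ∈ ℝ and |g^{(N)}(t)| ≤ π^N · B for all t ∈ ℝ (the Bernstein bound for π-bandlimited functions), let T > 0, and let γ_k = g(kT). Then for every k ∈ ℤ, |(Δ^N γ)_k| ≤ (Tπe)^N · B. -/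
variable {E : Type*} [NormedAddCommGroup E] [NormedSpace ℝ E]

def shiftDiff (h : ℝ) (f : ℝ → E) : ℝ → E := fun x => f (x + h) - f x

theorem ContDiff.shiftDiff {n : ℕ} {f : ℝ → E} (hf : ContDiff ℝ n f) (h : ℝ) :
    ContDiff ℝ n (shiftDiff h f) :=
  (hf.comp (contDiff_id.add contDiff_const)).sub hf

theorem iteratedDeriv_shiftDiff {n : ℕ} {f : ℝ → E} (hf : ContDiff ℝ n f) (h : ℝ) :
    iteratedDeriv n (shiftDiff h f) = shiftDiff h (iteratedDeriv n f) := by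
  funext x
  have hshift : ContDiff ℝ n fun y => f (y + h) := hf.comp (contDiff_id.add contDiff_const)
  exact (iteratedDeriv_fun_sub hshift.contDiffAt hf.contDiffAt).trans
    (congrArg (· - _) (congrFun (iteratedDeriv_comp_add_const n f h) x))

theorem norm_shiftDiff_le {f : ℝ → E} (hf : Differentiable ℝ f) {C : ℝ}
    (hC : ∀ t, ‖deriv f t‖ ≤ C) (h x : ℝ) : ‖shiftDiff h f x‖ ≤ C * |h| := by
  simpa [shiftDiff] using convex_univ.norm_image_sub_le_of_norm_deriv_le
    (fun t _ => hf t) (fun t _ => hC t) (Set.mem_univ x) (Set.mem_univ (x + h))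

theorem norm_iterate_shiftDiff_le (h : ℝ) {n : ℕ} {f : ℝ → E} (hf : ContDiff ℝ n f) {C : ℝ}
    (hC : ∀ t, ‖iteratedDeriv n f t‖ ≤ C) (x : ℝ) :
    ‖(shiftDiff h)^[n] f x‖ ≤ |h| ^ n * C := by
  induction n generalizing f C with
  | zero => simpa using hC x
  | succ n ih =>
    have hfn : ContDiff ℝ n f := hf.of_le (by exact_mod_cast n.le_succ)
    have hderiv : ∀ t, ‖iteratedDeriv n (shiftDiff h f) t‖ ≤ C * |h| := by
      rw [iteratedDeriv_shiftDiff hfn]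
      refine norm_shiftDiff_le (hf.differentiable_iteratedDeriv n (by exact_mod_cast n.lt_succ_self))
        (fun t => ?_) h
      rw [← iteratedDeriv_succ]
      exact hC t
    calc ‖(shiftDiff h)^[n + 1] f x‖ = ‖(shiftDiff h)^[n] (shiftDiff h f) x‖ := by
          rw [Function.iterate_succ_apply]
      _ ≤ |h| ^ n * (C * |h|) := ih (hfn.shiftDiff h) hderiv
      _ = |h| ^ (n + 1) * C := by ring

theorem semiconj_sample_shiftDiff_fdiff (T : ℝ) :
    Function.Semiconj (fun (f : ℝ → ℝ) (k : ℤ) => f (k * T)) (shiftDiff T) fdiff := by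
  intro f
  funext k
  simp only [shiftDiff, fdiff, Int.cast_add, Int.cast_one, add_mul, one_mul]

theorem fdiff_iter_samples_bernstein_bound_general (N : ℕ) (g : ℝ → ℝ)
    (hg : ContDiff ℝ N g) (B : ℝ) (hB : 0 ≤ B)
    (hderiv : ∀ t : ℝ, |iteratedDeriv N g t| ≤ Real.pi ^ N * B)
    (T : ℝ) (hT : 0 < T) (γ : ℤ → ℝ) (hγ : ∀ k : ℤ, γ k = g (k * T)) :
    ∀ k : ℤ, |(fdiff^[N] γ) k| ≤ (T * Real.pi * Real.exp 1) ^ N * B := by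
  intro k
  obtain rfl : γ = fun k : ℤ => g (k * T) := funext hγ
  rw [← ((semiconj_sample_shiftDiff_fdiff T).iterate_right N).eq g]
  have hsample := norm_iterate_shiftDiff_le T hg hderiv (k * T)
  rw [Real.norm_eq_abs, abs_of_pos hT] at hsample
  have he : (1 : ℝ) ≤ Real.exp 1 ^ N := one_le_pow₀ (Real.one_le_exp zero_le_one)
  calc _ ≤ T ^ N * (Real.pi ^ N * B) := hsample
    _ ≤ T ^ N * (Real.pi ^ N * B) * Real.exp 1 ^ N := le_mul_of_one_le_right (by positivity) he
    _ = (T * Real.pi * Real.exp 1) ^ N * B := by ring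

/-- with the Bernstein bound, `|(Δ^N γ)_k| ≤ (Tπe)ᴺ B`. -/
theorem fdiff_iter_samples_bernstein_bound (N : ℕ) (hN : 1 ≤ N) (g : ℝ → ℝ)
    (hg : ContDiff ℝ N g) (B : ℝ) (hB : 0 ≤ B)
    (hbound : ∀ t : ℝ, |g t| ≤ B)
    (hderiv : ∀ t : ℝ, |iteratedDeriv N g t| ≤ Real.pi ^ N * B)
    (T : ℝ) (hT : 0 < T) (γ : ℤ → ℝ) (hγ : ∀ k : ℤ, γ k = g (k * T)) :
    ∀ k : ℤ, |(fdiff^[N] γ) k| ≤ (T * Real.pi * Real.exp 1) ^ N * B :=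
  fdiff_iter_samples_bernstein_bound_general N g hg B hB hderiv T hT γ hγ
end

section
/- Let λ > 0, N ∈ ℕ, and let γ : ℤ → ℝ be a sequence such that −λ ≤ (Δ^N γ)_k < λ for every k ∈ ℤ. Then for every k ∈ ℤ, (Δ^N γ)_k = M_λ((Δ^N y)_k), where y is the folded sample sequence y_k = M_λ(γ_k). In other words, the N-th finite difference of the true samples can be computed exactly from the modulo samples. -/
/-! The centred modulo map is `toIcoMod` with period `2λ` on the window `[-λ, λ)`, so it only sees
its argument modulo `2λ ℤ`. The sequence `γ - y` takes values in `2λ ℤ`, and so does its `N`-th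
difference, since `Δ` is additive and maps sequences with values in a subgroup into it. Hence
`M_λ(Δ^N y) = M_λ(Δ^N γ)`, which is `Δ^N γ` itself because it already lies in the window. -/

theorem Mlam_eq_toIcoMod {l : ℝ} (hl : 0 < l) (t : ℝ) :
    Mlam l t = toIcoMod (by positivity : 0 < 2 * l) (-l) t := by
  have hwindow : (t - -l) / (2 * l) = t / (2 * l) + 1 / 2 := by field_simp; ring
  rw [Mlam, toIcoMod, toIcoDiv_eq_floor, hwindow, Int.fract, zsmul_eq_mul]
  field_simp
  ring

theorem fdiff_sub (a b : ℤ → ℝ) : fdiff (a - b) = fdiff a - fdiff b := by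
  funext k
  simp only [fdiff, Pi.sub_apply]
  ring

theorem fdiff_iterate_sub (N : ℕ) (a b : ℤ → ℝ) :
    fdiff^[N] (a - b) = fdiff^[N] a - fdiff^[N] b := by
  induction N generalizing a b with
  | zero => rfl
  | succ n ih => simp only [Function.iterate_succ_apply, fdiff_sub, ih]

theorem fdiff_iterate_mem {S : AddSubgroup ℝ} (N : ℕ) {a : ℤ → ℝ} (ha : ∀ k, a k ∈ S) (k : ℤ) :
    fdiff^[N] a k ∈ S := by
  induction N generalizing a with
  | zero => exact ha k
  | succ n ih => exact ih (fun j => S.sub_mem (ha (j + 1)) (ha j))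

/-- the `N`-th finite difference of the true samples is computable
exactly from the modulo samples. -/
theorem fdiff_of_true_from_folded (l : ℝ) (hl : 0 < l) (N : ℕ) (γ : ℤ → ℝ)
    (hsmall : ∀ k : ℤ, -l ≤ (fdiff^[N] γ) k ∧ (fdiff^[N] γ) k < l)
    (y : ℤ → ℝ) (hy : ∀ k : ℤ, y k = Mlam l (γ k)) :
    ∀ k : ℤ, (fdiff^[N] γ) k = Mlam l ((fdiff^[N] y) k) := by
  intro k
  have hfold : ∀ j, (γ - y) j ∈ AddSubgroup.zmultiples (2 * l) := fun j => by
    rw [Pi.sub_apply, hy, Mlam_eq_toIcoMod hl, self_sub_toIcoMod]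
    exact AddSubgroup.zsmul_mem_zmultiples _ _
  obtain ⟨n, hn⟩ := fdiff_iterate_mem N hfold k
  simp only [fdiff_iterate_sub, Pi.sub_apply] at hn
  rw [Mlam_eq_toIcoMod hl, eq_comm, toIcoMod_eq_iff]
  refine ⟨⟨(hsmall k).1, by linarith [(hsmall k).2]⟩, -n, ?_⟩
  rw [neg_zsmul]
  linarith
end

section
/- Unlimited sampling theorem (identifiability form at the sample level): let λ, β, T > 0 and N ≥ 1 with (Tπe)^N · β < λ. Let g, h : ℝ → ℝ be N-times continuously differentiable functions satisfying, for all t ∈ ℝ, |g(t)| ≤ β, |h(t)| ≤ β, |g^{(N)}(t)| ≤ π^N·β, and |h^{(N)}(t)| ≤ π^N·β (the Bernstein bound satisfied by π-bandlimited functions with sup-norm at most β). If the modulo samples agree, i.e., M_λ(g(kT)) = M_λ(h(kT)) for every k ∈ ℤ, then there exists a single integer m such that h(kT) = g(kT) + 2λ·m for every k ∈ ℤ; that is, the sample sequence of g is determined by its modulo samples up to an additive multiple of 2λ. -/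
open fwdDiff Real

theorem Mlam_eq_Mlam_iff {l : ℝ} (hl : l ≠ 0) {x y : ℝ} :
    Mlam l x = Mlam l y ↔ ∃ m : ℤ, y = x + 2 * l * m := by
  have hl2 : 2 * l ≠ 0 := mul_ne_zero two_ne_zero hl
  simp only [Mlam, mul_right_inj' hl2, sub_left_inj, Int.fract_eq_fract, add_sub_add_right_eq_sub]
  simp only [← sub_div, div_eq_iff hl2]
  constructor <;> rintro ⟨m, hm⟩ <;> exact ⟨-m, by push_cast; linarith⟩

section Composition

variable {M M' G G' : Type*} [AddCommMonoid M] [AddCommMonoid M'] [AddCommGroup G]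
  [AddCommGroup G']

theorem fwdDiff_iter_comp_addMonoidHom (φ : M →+ M') (f : M' → G) (h : M) (n : ℕ) (y : M) :
    Δ_[h] ^[n] (f ∘ φ) y = Δ_[φ h] ^[n] f (φ y) := by
  simp [fwdDiff_iter_eq_sum_shift]

theorem fwdDiff_iter_addMonoidHom_comp (φ : G →+ G') (f : M → G) (h : M) (n : ℕ) (y : M) :
    Δ_[h] ^[n] (φ ∘ f) y = φ (Δ_[h] ^[n] f y) := by
  simp [fwdDiff_iter_eq_sum_shift]

end Composition

section Derivative

variable {𝕜 E : Type*} [RCLike 𝕜] [NormedAddCommGroup E] [NormedSpace 𝕜 E]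

theorem ContDiff.fwdDiff {n : WithTop ℕ∞} {f : 𝕜 → E} (hf : ContDiff 𝕜 n f) (h : 𝕜) :
    ContDiff 𝕜 n (Δ_[h] f) :=
  (hf.comp (contDiff_id.add contDiff_const)).sub hf

theorem iteratedDeriv_fwdDiff {n : ℕ} {f : 𝕜 → E} (hf : ContDiff 𝕜 n f) (h : 𝕜) :
    iteratedDeriv n (Δ_[h] f) = Δ_[h] (iteratedDeriv n f) := by
  ext x
  have hshift : ContDiff 𝕜 n (fun z => f (z + h)) := hf.comp (contDiff_id.add contDiff_const)
  rw [show Δ_[h] f = (fun z => f (z + h)) - f from rfl,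
    iteratedDeriv_sub hshift.contDiffAt hf.contDiffAt, iteratedDeriv_comp_add_const]
  rfl

theorem norm_fwdDiff_le {f : 𝕜 → E} (hf : Differentiable 𝕜 f) {C : ℝ}
    (hC : ∀ x, ‖deriv f x‖ ≤ C) (h x : 𝕜) : ‖Δ_[h] f x‖ ≤ ‖h‖ * C := by
  simpa [fwdDiff, mul_comm] using
    convex_univ.norm_image_sub_le_of_norm_deriv_le (fun x _ => hf x) (fun x _ => hC x)
      (Set.mem_univ x) (Set.mem_univ (x + h))

theorem norm_fwdDiff_iter_le {n : ℕ} {f : 𝕜 → E} (hf : ContDiff 𝕜 n f) {C : ℝ}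
    (hC : ∀ x, ‖iteratedDeriv n f x‖ ≤ C) (h x : 𝕜) : ‖Δ_[h] ^[n] f x‖ ≤ ‖h‖ ^ n * C := by
  induction n generalizing f C with
  | zero => simpa using hC x
  | succ n ih =>
    have hf' : ContDiff 𝕜 n f := hf.of_le (by exact_mod_cast n.le_succ)
    have hderiv : ∀ x, ‖iteratedDeriv n (Δ_[h] f) x‖ ≤ ‖h‖ * C := by
      intro x
      rw [iteratedDeriv_fwdDiff hf']
      refine norm_fwdDiff_le (hf.differentiable_iteratedDeriv n (by exact_mod_cast n.lt_succ_self))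
        (fun y => ?_) h x
      rw [← iteratedDeriv_succ]
      exact hC y
    rw [Function.iterate_succ_apply, pow_succ, mul_assoc]
    exact ih (hf'.fwdDiff h) hderiv

end Derivative

section Archimedean

variable {G : Type*} [AddCommGroup G] [LinearOrder G] [IsOrderedAddMonoid G] [Archimedean G]
  {a : ℤ → G} {C : G}

theorem eq_zero_of_fwdDiff_eq_const_of_abs_le (ha : ∀ k, |a k| ≤ C) {c : G}
    (hc : ∀ k, Δ_[1] a k = c) : c = 0 := by
  have hlin : ∀ n : ℕ, a n = a 0 + n • c := by
    intro n
    induction n with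
    | zero => simp
    | succ n ih =>
      have := hc n
      simp only [fwdDiff] at this
      push_cast
      rw [succ_nsmul, ← add_assoc, ← ih, ← this]
      abel
  by_contra hne
  obtain ⟨n, hn⟩ := exists_lt_nsmul (abs_pos.2 hne) (C + C)
  have : n • |c| ≤ C + C := by
    rw [← abs_nsmul, eq_sub_of_add_eq' (hlin n).symm]
    exact (abs_sub _ _).trans (add_le_add (ha _) (ha _))
  exact (hn.trans_le this).false

theorem apply_eq_apply_zero_of_fwdDiff_iter_eq_zero (ha : ∀ k, |a k| ≤ C) {n : ℕ}
    (hn : ∀ k, Δ_[1] ^[n] a k = 0) (k : ℤ) : a k = a 0 := by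
  induction n generalizing a C k with
  | zero => simp only [Function.iterate_zero, id] at hn; rw [hn, hn]
  | succ n ih =>
    have hΔa : ∀ j, |Δ_[1] a j| ≤ C + C := fun j =>
      (abs_sub _ _).trans (add_le_add (ha _) (ha _))
    have hconst : ∀ j, Δ_[1] a j = Δ_[1] a 0 := fun j => ih hΔa hn j
    have hperiodic : Function.Periodic a 1 := fun j =>
      sub_eq_zero.1 ((hconst j).trans (eq_zero_of_fwdDiff_eq_const_of_abs_le ha hconst))
    simpa using hperiodic.int_mul_eq k

end Archimedean

theorem abs_pow_mul_lt_two_mul_of_oversampling {l β T : ℝ} {N : ℕ} (hT : 0 ≤ T) (hβ : 0 ≤ β)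
    (hover : (T * π * exp 1) ^ N * β < l) : |T| ^ N * (π ^ N * β + π ^ N * β) < 2 * l := by
  have he : (T * π) ^ N ≤ (T * π * exp 1) ^ N :=
    pow_le_pow_left₀ (by positivity)
      (le_mul_of_one_le_right (by positivity) (one_le_exp zero_le_one)) N
  calc |T| ^ N * (π ^ N * β + π ^ N * β) = 2 * ((T * π) ^ N * β) := by
        rw [abs_of_nonneg hT, mul_pow]; ring
    _ ≤ 2 * ((T * π * exp 1) ^ N * β) := by gcongr
    _ < 2 * l := by linarith

theorem unlimited_sampling_identifiability_general (l β T : ℝ) (hl : 0 < l) (hβ : 0 < β)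
    (hT : 0 < T) (N : ℕ)
    (hover : (T * Real.pi * Real.exp 1) ^ N * β < l)
    (g h : ℝ → ℝ) (hg : ContDiff ℝ N g) (hh : ContDiff ℝ N h)
    (hgB : ∀ t : ℝ, |g t| ≤ β) (hhB : ∀ t : ℝ, |h t| ≤ β)
    (hgD : ∀ t : ℝ, |iteratedDeriv N g t| ≤ Real.pi ^ N * β)
    (hhD : ∀ t : ℝ, |iteratedDeriv N h t| ≤ Real.pi ^ N * β)
    (hmod : ∀ k : ℤ, Mlam l (g (k * T)) = Mlam l (h (k * T))) :
    ∃ m : ℤ, ∀ k : ℤ, h (k * T) = g (k * T) + 2 * l * m := by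
  choose m hm using fun k : ℤ => (Mlam_eq_Mlam_iff hl.ne').1 (hmod k)
  let sample : ℤ →+ ℝ := (AddMonoidHom.mulRight T).comp (Int.castAddHom ℝ)
  let scale : ℤ →+ ℝ := (AddMonoidHom.mulLeft (2 * l)).comp (Int.castAddHom ℝ)
  have hsamples : (h - g) ∘ sample = scale ∘ m := by
    ext k; simp [sample, scale, hm k]
  have hΔ (k : ℤ) : Δ_[T] ^[N] (h - g) (k * T) = 2 * l * Δ_[1] ^[N] m k := by
    have := fwdDiff_iter_comp_addMonoidHom sample (h - g) 1 N k
    rw [hsamples, fwdDiff_iter_addMonoidHom_comp] at this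
    simpa [sample, scale] using this.symm
  have hD (t : ℝ) : ‖iteratedDeriv N (h - g) t‖ ≤ π ^ N * β + π ^ N * β := by
    rw [iteratedDeriv_sub hh.contDiffAt hg.contDiffAt]
    exact (abs_sub _ _).trans (add_le_add (hhD t) (hgD t))
  have hΔm (k : ℤ) : Δ_[1] ^[N] m k = 0 := by
    have hlt : |2 * l * Δ_[1] ^[N] m k| < 2 * l := by
      rw [← hΔ]
      exact (norm_fwdDiff_iter_le (hh.sub hg) hD T _).trans_lt
        (abs_pow_mul_lt_two_mul_of_oversampling hT.le hβ.le hover)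
    rw [abs_mul, abs_of_pos (by positivity), mul_lt_iff_lt_one_right (by positivity)] at hlt
    exact Int.abs_lt_one_iff.1 (by exact_mod_cast hlt)
  have hconst := apply_eq_apply_zero_of_fwdDiff_iter_eq_zero (a := scale ∘ m) (C := β + β)
    (fun k => by rw [← hsamples]; exact (abs_sub _ _).trans (add_le_add (hhB _) (hgB _)))
    (fun k => by rw [fwdDiff_iter_addMonoidHom_comp, hΔm, map_zero])
  refine ⟨m 0, fun k => ?_⟩
  rw [hm k, show m k = m 0 by simpa [scale, hl.ne'] using hconst k]

/-- unlimited sampling theorem, identifiability form at the sample level. -/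
theorem unlimited_sampling_identifiability (l β T : ℝ) (hl : 0 < l) (hβ : 0 < β)
    (hT : 0 < T) (N : ℕ) (hN : 1 ≤ N)
    (hover : (T * Real.pi * Real.exp 1) ^ N * β < l)
    (g h : ℝ → ℝ) (hg : ContDiff ℝ N g) (hh : ContDiff ℝ N h)
    (hgB : ∀ t : ℝ, |g t| ≤ β) (hhB : ∀ t : ℝ, |h t| ≤ β)
    (hgD : ∀ t : ℝ, |iteratedDeriv N g t| ≤ Real.pi ^ N * β)
    (hhD : ∀ t : ℝ, |iteratedDeriv N h t| ≤ Real.pi ^ N * β)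
    (hmod : ∀ k : ℤ, Mlam l (g (k * T)) = Mlam l (h (k * T))) :
    ∃ m : ℤ, ∀ k : ℤ, h (k * T) = g (k * T) + 2 * l * m :=
  unlimited_sampling_identifiability_general l β T hl hβ hT N hover g h hg hh hgB hhB hgD hhD hmod
end
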